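/- arXiv:1309.4709 — 2 statements merged into one kernel-verified Lean document; each statement's English description precedes it below -/
import Mathlib

section
/- The Douglas–Rachford operator T and its adjoint T* satisfy T*(R_V R_U) = (R_V R_U)T* = T and T(R_U R_V) = (R_U R_V)T = T*. -/
noncomputable section

variable {X : Type*} [NormedAddCommGroup X] [InnerProductSpace ℝ X] [CompleteSpace X]

/-- The orthogonal projection onto a closed subspace `W`, as an operator on `X`. -/
noncomputable def proj (W : Submodule ℝ X) [Submodule.HasOrthogonalProjection W] : X →L[ℝ] X :=
  W.subtypeL.comp (Submodule.orthogonalProjectionOnto W)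

instance infHOP (U V : Submodule ℝ X) [CompleteSpace U] [CompleteSpace V] :
    Submodule.HasOrthogonalProjection (U ⊓ V) := by
  have hU : IsClosed (U : Set X) := (completeSpace_coe_iff_isComplete.mp ‹_›).isClosed
  have hV : IsClosed (V : Set X) := (completeSpace_coe_iff_isComplete.mp ‹_›).isClosed
  have : CompleteSpace (U ⊓ V : Submodule ℝ X) := (hU.inter hV).completeSpace_coe
  infer_instance

/-- The fixed point set `Fix T = {x | T x = x}` of a continuous linear operator `T`,
as a submodule of `X`. -/
noncomputable def fixedSpace (T : X →L[ℝ] X) : Submodule ℝ X := LinearMap.ker ((T - 1 : X →L[ℝ] X) : X →ₗ[ℝ] X)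

instance fixedSpaceHOP (T : X →L[ℝ] X) : Submodule.HasOrthogonalProjection (fixedSpace T) := by
  have h : IsClosed ((fixedSpace T : Submodule ℝ X) : Set X) := by
    have : ((fixedSpace T : Submodule ℝ X) : Set X) = {x | T x = x} := by
      ext x; simp [fixedSpace, LinearMap.mem_ker, sub_eq_zero]
    rw [this]
    exact isClosed_eq T.continuous continuous_id
  have : CompleteSpace (fixedSpace T) := h.completeSpace_coe
  infer_instance

/-- The reflector `R_W = 2 P_W − Id` associated with `W`. -/
noncomputable def reflector (W : Submodule ℝ X) [Submodule.HasOrthogonalProjection W] : X →L[ℝ] X :=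
  2 • proj W - 1

/-- The Douglas–Rachford operator `T = T_{V,U} = P_V (2 P_U − Id) + Id − P_U`.
(The first argument is `U`, the second is `V`.) -/
noncomputable def drOperator (U V : Submodule ℝ X) [Submodule.HasOrthogonalProjection U]
    [Submodule.HasOrthogonalProjection V] : X →L[ℝ] X :=
  proj V * (2 • proj U - 1) + 1 - proj U

/-- The cosine of the Friedrichs angle between `U` and `V`. -/
noncomputable def friedrichs (U V : Submodule ℝ X) : ℝ :=
  sSup {c : ℝ | ∃ u v : X, u ∈ U ⊓ (U ⊓ V)ᗮ ∧ v ∈ V ⊓ (U ⊓ V)ᗮ ∧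
    ‖u‖ ≤ 1 ∧ ‖v‖ ≤ 1 ∧ c = inner ℝ u v}

/-! Each reflector is a self-adjoint involution since `P_W` is a self-adjoint idempotent, and
expanding gives `T = ½ (Id + S)` with `S = R_V R_U`. So `T* = ½ (Id + S⁻¹)` with `S⁻¹ = R_U R_V`,
and `½ (Id + S⁻¹) S = ½ (S + Id) = T`; the other three identities are the same computation. -/

theorem IsIdempotentElem.two_nsmul_sub_one_mul_self {R : Type*} [Ring R] {p : R}
    (hp : IsIdempotentElem p) : (2 • p - 1) * (2 • p - 1) = 1 := by
  rw [two_nsmul]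
  noncomm_ring
  rw [hp.eq]
  abel

theorem IsSelfAdjoint.two_nsmul_sub_one {R : Type*} [Ring R] [StarRing R] {p : R}
    (hp : IsSelfAdjoint p) : IsSelfAdjoint (2 • p - 1) := by
  rw [two_nsmul]
  exact (hp.add hp).sub (.one R)

theorem smul_one_add_mul_of_mul_eq_one {R A : Type*} [CommSemiring R] [Semiring A] [Algebra R A]
    (c : R) {s t : A} (h : t * s = 1) : c • (1 + t) * s = c • (1 + s) := by
  rw [smul_mul_assoc, add_mul, one_mul, h, add_comm]

theorem mul_smul_one_add_of_mul_eq_one {R A : Type*} [CommSemiring R] [Semiring A] [Algebra R A]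
    (c : R) {s t : A} (h : s * t = 1) : s * c • (1 + t) = c • (1 + s) := by
  rw [mul_smul_comm, mul_add, mul_one, h, add_comm]

omit [CompleteSpace X] in
theorem reflector_mul_self (W : Submodule ℝ X) [W.HasOrthogonalProjection] :
    reflector W * reflector W = 1 :=
  W.isIdempotentElem_starProjection.two_nsmul_sub_one_mul_self

theorem isSelfAdjoint_reflector (W : Submodule ℝ X) [W.HasOrthogonalProjection] :
    IsSelfAdjoint (reflector W) :=
  (isSelfAdjoint_starProjection W).two_nsmul_sub_one

omit [CompleteSpace X] in
theorem reflector_mul_reflector_mul_swap (U V : Submodule ℝ X) [U.HasOrthogonalProjection]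
    [V.HasOrthogonalProjection] : reflector U * reflector V * (reflector V * reflector U) = 1 := by
  rw [mul_assoc, ← mul_assoc (reflector V), reflector_mul_self, one_mul, reflector_mul_self]

omit [CompleteSpace X] in
theorem drOperator_eq_inv_two_smul (U V : Submodule ℝ X) [U.HasOrthogonalProjection]
    [V.HasOrthogonalProjection] :
    drOperator U V = (2⁻¹ : ℝ) • (1 + reflector V * reflector U) := by
  rw [eq_inv_smul_iff₀ two_ne_zero, ofNat_smul_eq_nsmul, drOperator, reflector, reflector]
  noncomm_ring

theorem adjoint_drOperator (U V : Submodule ℝ X) [U.HasOrthogonalProjection]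
    [V.HasOrthogonalProjection] :
    ContinuousLinearMap.adjoint (drOperator U V) = drOperator V U := by
  rw [← ContinuousLinearMap.star_eq_adjoint, drOperator_eq_inv_two_smul, drOperator_eq_inv_two_smul,
    star_smul, star_add, star_one, star_mul, (isSelfAdjoint_reflector U).star_eq,
    (isSelfAdjoint_reflector V).star_eq, star_trivial]

/-- `T*(R_V R_U) = (R_V R_U)T* = T` and `T(R_U R_V) = (R_U R_V)T = T*`. -/
theorem drOperator_adjoint_reflector_identities
    (U V : Submodule ℝ X) [CompleteSpace U] [CompleteSpace V] :
    ContinuousLinearMap.adjoint (drOperator U V) * (reflector V * reflector U) = drOperator U V ∧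
    (reflector V * reflector U) * ContinuousLinearMap.adjoint (drOperator U V) = drOperator U V ∧
    drOperator U V * (reflector U * reflector V) = ContinuousLinearMap.adjoint (drOperator U V) ∧
    (reflector U * reflector V) * drOperator U V = ContinuousLinearMap.adjoint (drOperator U V) := by
  have hUV := reflector_mul_reflector_mul_swap U V
  have hVU := reflector_mul_reflector_mul_swap V U
  rw [adjoint_drOperator, drOperator_eq_inv_two_smul U V, drOperator_eq_inv_two_smul V U]
  exact ⟨smul_one_add_mul_of_mul_eq_one _ hUV, mul_smul_one_add_of_mul_eq_one _ hVU,
    smul_one_add_mul_of_mul_eq_one _ hVU, mul_smul_one_add_of_mul_eq_one _ hUV⟩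
end
end

section
/- For the Douglas–Rachford operator T, the equality Fix T = U ∩ V holds if and only if the closure of U + V equals X. -/
noncomputable section

variable {X : Type*} [NormedAddCommGroup X] [InnerProductSpace ℝ X] [CompleteSpace X]

/-! `Fix T` splits orthogonally as `(U ∩ V) ⊕ (U^⊥ ∩ V^⊥)`: a point `x` is fixed by `T` exactly
when `P_U x ∈ V` and `x - P_U x ∈ V^⊥`, and then `x = P_U x + (x - P_U x)` is that splitting.
Hence `Fix T = U ∩ V` iff `U^⊥ ∩ V^⊥ = (U + V)^⊥` is trivial, i.e. iff `U + V` is dense. -/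

theorem Submodule.starProjection_eq_iff {𝕜 E : Type*} [RCLike 𝕜] [NormedAddCommGroup E]
    [InnerProductSpace 𝕜 E] {K : Submodule 𝕜 E} [K.HasOrthogonalProjection] {u v : E} :
    K.starProjection u = v ↔ v ∈ K ∧ u - v ∈ Kᗮ := by
  constructor
  · rintro rfl
    exact ⟨K.starProjection_apply_mem u, K.sub_starProjection_mem_orthogonal u⟩
  · rintro ⟨hv, hvo⟩
    exact K.eq_starProjection_of_mem_orthogonal hv hvo

section DouglasRachford

variable {E : Type*} [NormedAddCommGroup E] [InnerProductSpace ℝ E]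
  (U V : Submodule ℝ E) [U.HasOrthogonalProjection] [V.HasOrthogonalProjection]

theorem proj_eq_starProjection : proj U = U.starProjection := rfl

theorem drOperator_apply (x : E) :
    drOperator U V x = V.starProjection (2 • U.starProjection x - x) + x - U.starProjection x := by
  simp [drOperator, proj_eq_starProjection]

theorem mem_fixedSpace_drOperator_iff {x : E} :
    x ∈ fixedSpace (drOperator U V) ↔ U.starProjection x ∈ V ∧ x - U.starProjection x ∈ Vᗮ := by
  have hreflect : 2 • U.starProjection x - x - U.starProjection x = -(x - U.starProjection x) := by
    rw [two_smul]; abel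
  rw [fixedSpace, LinearMap.mem_ker, ContinuousLinearMap.coe_coe, sub_apply,
    one_apply_eq_self, sub_eq_zero, drOperator_apply, add_sub_right_comm, add_eq_right,
    sub_eq_zero, Submodule.starProjection_eq_iff, hreflect, Submodule.neg_mem_iff]

theorem fixedSpace_drOperator : fixedSpace (drOperator U V) = U ⊓ V ⊔ Uᗮ ⊓ Vᗮ := by
  ext x
  rw [Submodule.mem_sup, mem_fixedSpace_drOperator_iff]
  constructor
  · rintro ⟨hV, hVo⟩
    exact ⟨_, ⟨U.starProjection_apply_mem x, hV⟩, _,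
      ⟨U.sub_starProjection_mem_orthogonal x, hVo⟩, add_sub_cancel _ _⟩
  · rintro ⟨y, ⟨hyU, hyV⟩, z, ⟨hzU, hzV⟩, rfl⟩
    rw [U.eq_starProjection_of_mem_orthogonal' hyU hzU rfl, add_sub_cancel_left]
    exact ⟨hyV, hzV⟩

end DouglasRachford

/-- `Fix T = U ∩ V` if and only if the closure of `U + V` equals `X`. -/
theorem fixedSpace_eq_inf_iff_dense_sum
    (U V : Submodule ℝ X) [CompleteSpace U] [CompleteSpace V] :
    fixedSpace (drOperator U V) = U ⊓ V ↔ (U ⊔ V).topologicalClosure = ⊤ := by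
  have hdisj : Disjoint (Uᗮ ⊓ Vᗮ) (U ⊓ V) :=
    U.orthogonal_disjoint.symm.mono inf_le_left inf_le_left
  rw [fixedSpace_drOperator, sup_eq_left, Submodule.topologicalClosure_eq_top_iff,
    ← Submodule.inf_orthogonal]
  exact ⟨hdisj.eq_bot_of_le, fun h => h ▸ bot_le⟩
end
end
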